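/- Let (a_m) be the integer sequence defined by a_0 = a_1 = 1, a_2 = 2, and a_m = 5a_{m-1} − 6a_{m-2} + a_{m-3} for m ≥ 3. Then for all integers j ≥ 0: D_5(0, 2j) = a_j, D_5(1, 2j+1) = a_{j+1}, D_5(2, 2j+2) = a_{j+2} − a_{j+1}, D_5(3, 2j+3) = a_{j+3} − 2a_{j+2}, D_5(4, 2j+4) = a_{j+4} − 3a_{j+3} + a_{j+2}, and D_5(5, 2j+5) = a_{j+4} − 3a_{j+3} + a_{j+2}. -/

import Mathlib

/-- Number of directed paths from `(0,0)` to `(j,i)` in the Bratteli diagram for `SU(2)_k`. -/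
def bratteliD (k : ℕ) : ℕ → ℕ → ℕ
  | i, 0 => if i = 0 then 1 else 0
  | i, j + 1 =>
      if i ≤ k then
        (if 1 ≤ i then bratteliD k (i - 1) j else 0) +
        (if i + 1 ≤ k then bratteliD k (i + 1) j else 0)
      else 0

/-- The sequence `a_0 = a_1 = 1`, `a_2 = 2`, `a_m = 5a_{m-1} - 6a_{m-2} + a_{m-3}`. -/
def seqA : ℕ → ℤ
  | 0 => 1
  | 1 => 1
  | 2 => 2
  | m + 3 => 5 * seqA (m + 2) - 6 * seqA (m + 1) + seqA m

/-!
Induction on `j`, following the diagonal `i ↦ D₅(i, 2j + i)`. Each level `1 ≤ i ≤ 4` satisfies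
the Pascal-type rule `D(i, n+1) = D(i-1, n) + D(i+1, n)`, so the new diagonal is computed from the
old one by a sweep from level `0` to level `4`; the reflection `D₅(5, n+1) = D₅(4, n)` at the top
level is what produces the third-order recurrence of `a`.
-/

lemma bratteliD_zero_succ {k : ℕ} (hk : 1 ≤ k) (n : ℕ) :
    bratteliD k 0 (n + 1) = bratteliD k 1 n := by
  simp [bratteliD, hk]

lemma bratteliD_succ_succ {k i : ℕ} (hi : i + 2 ≤ k) (n : ℕ) :
    bratteliD k (i + 1) (n + 1) = bratteliD k i n + bratteliD k (i + 2) n := by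
  simp [bratteliD, hi, show i + 1 ≤ k by omega]

lemma bratteliD_self_succ (k n : ℕ) :
    bratteliD (k + 1) (k + 1) (n + 1) = bratteliD (k + 1) k n := by
  simp [bratteliD]

lemma seqA_add_three (m : ℕ) :
    seqA (m + 3) = 5 * seqA (m + 2) - 6 * seqA (m + 1) + seqA m := rfl

lemma bratteliD_five_diagonal (j : ℕ) :
    (bratteliD 5 0 (2 * j) : ℤ) = seqA j ∧
    (bratteliD 5 1 (2 * j + 1) : ℤ) = seqA (j + 1) ∧
    (bratteliD 5 2 (2 * j + 2) : ℤ) = seqA (j + 2) - seqA (j + 1) ∧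
    (bratteliD 5 3 (2 * j + 3) : ℤ) = seqA (j + 3) - 2 * seqA (j + 2) ∧
    (bratteliD 5 4 (2 * j + 4) : ℤ) = seqA (j + 4) - 3 * seqA (j + 3) + seqA (j + 2) := by
  induction j with
  | zero => decide
  | succ j ih =>
    obtain ⟨-, h1, h2, h3, h4⟩ := ih
    have h5 : (bratteliD 5 5 (2 * j + 5) : ℤ) = bratteliD 5 4 (2 * j + 4) :=
      congrArg _ (bratteliD_self_succ 4 _)
    have d0 : (bratteliD 5 0 (2 * j + 2) : ℤ) = seqA (j + 1) := by
      rw [bratteliD_zero_succ (by norm_num), h1]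
    have d1 : (bratteliD 5 1 (2 * j + 3) : ℤ) = seqA (j + 2) := by
      rw [bratteliD_succ_succ (i := 0) (by norm_num)]; push_cast; rw [d0, h2]; ring
    have d2 : (bratteliD 5 2 (2 * j + 4) : ℤ) = seqA (j + 3) - seqA (j + 2) := by
      rw [bratteliD_succ_succ (i := 1) (by norm_num)]; push_cast; rw [d1, h3]; ring
    have d3 : (bratteliD 5 3 (2 * j + 5) : ℤ) = seqA (j + 4) - 2 * seqA (j + 3) := by
      rw [bratteliD_succ_succ (i := 2) (by norm_num)]; push_cast; rw [d2, h4]; ring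
    have d4 : (bratteliD 5 4 (2 * j + 6) : ℤ) =
        seqA (j + 5) - 3 * seqA (j + 4) + seqA (j + 3) := by
      rw [bratteliD_succ_succ (i := 3) (by norm_num)]; push_cast
      rw [d3, h5, h4, seqA_add_three (j + 2)]; ring
    exact ⟨d0, d1, d2, d3, d4⟩

theorem bratteliD_five_values (j : ℕ) :
    (bratteliD 5 0 (2 * j) : ℤ) = seqA j ∧
    (bratteliD 5 1 (2 * j + 1) : ℤ) = seqA (j + 1) ∧
    (bratteliD 5 2 (2 * j + 2) : ℤ) = seqA (j + 2) - seqA (j + 1) ∧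
    (bratteliD 5 3 (2 * j + 3) : ℤ) = seqA (j + 3) - 2 * seqA (j + 2) ∧
    (bratteliD 5 4 (2 * j + 4) : ℤ) = seqA (j + 4) - 3 * seqA (j + 3) + seqA (j + 2) ∧
    (bratteliD 5 5 (2 * j + 5) : ℤ) = seqA (j + 4) - 3 * seqA (j + 3) + seqA (j + 2) := by
  obtain ⟨h0, h1, h2, h3, h4⟩ := bratteliD_five_diagonal j
  exact ⟨h0, h1, h2, h3, h4, by rw [bratteliD_self_succ 4, h4]⟩
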